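/- arXiv:1908.07351 — 3 statements merged into one kernel-verified Lean document; each statement's English description precedes it below -/
import Mathlib

section
/- The sampling theorem with derivatives is exact in the following sense: for every σ ∈ ℝⁿ with all σ_j > 0 and every k̃ ∈ Eⁿ there exists an entire function f̃ : ℂⁿ → ℂ of exponential type σ, not identically zero, whose restriction to ℝⁿ lies in L^p(ℝⁿ) for every 1 ≤ p ≤ ∞, such that (∂^k f̃)(2πu/σ) = 0 for every u ∈ ℤⁿ and every k ∈ Eⁿ with k ≠ k̃. Consequently, the sampling formula of Theorem 1.1 becomes false if the term corresponding to any single k̃ ∈ Eⁿ is omitted. -/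
open MeasureTheory Complex Real Filter

/-- Partial derivative of `f : ℂⁿ → ℂ` in the `j`-th coordinate direction. -/
noncomputable def pderivC {n : ℕ} (j : Fin n) (f : (Fin n → ℂ) → ℂ) : (Fin n → ℂ) → ℂ :=
  fun z => fderiv ℂ f z (Pi.single j 1)

/-- Mixed partial derivative `∂^k f` for a multi-index `k`. -/
noncomputable def mixedPartial {n : ℕ} (k : Fin n → ℕ) (f : (Fin n → ℂ) → ℂ) :
    (Fin n → ℂ) → ℂ :=
  (List.finRange n).foldr (fun j g => (pderivC j)^[k j] g) f

/-- The sample point `2πu/σ` viewed in `ℂⁿ`. -/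
noncomputable def samplePt {n : ℕ} (σ : Fin n → ℝ) (u : Fin n → ℤ) : Fin n → ℂ :=
  fun j => ((2 * Real.pi * (u j : ℝ) / σ j : ℝ) : ℂ)

/-!
Take `f̃ z = ∏ⱼ g_{k̃ⱼ} (zⱼ)`, with one-variable factors of exponential type `σⱼ`:
`g₀ z = sinc² (σ z / 2)` and `g₁ z = sin (σ z / 2) · sinc² (σ z / 4)`. At the nodes `2πu/σ`
the factor `g₁` vanishes, and so does `g₀'`, because `g₀` is even and has a double zero at every
nonzero node. The derivative `∂^k` acts factorwise, so wherever `k` differs from `k̃` it produces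
a factor `g₁` or `g₀'`, which kills `∂^k f̃` at every node. The `sinc²` factors make each factor
bounded and integrable on `ℝ`, hence `f̃` lies in every `L^p`, `1 ≤ p ≤ ∞`.
-/

def IsOfExpType (s : ℝ) (g : ℂ → ℂ) : Prop :=
  ∃ C, ∀ z, ‖g z‖ ≤ C * Real.exp (s * |z.im|)

namespace IsOfExpType

variable {s t : ℝ} {g h : ℂ → ℂ}

lemma mul (hg : IsOfExpType s g) (hh : IsOfExpType t h) :
    IsOfExpType (s + t) (fun z => g z * h z) := by
  obtain ⟨C, hC⟩ := hg
  obtain ⟨D, hD⟩ := hh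
  refine ⟨C * D, fun z => ?_⟩
  calc ‖g z * h z‖ ≤ (C * Real.exp (s * |z.im|)) * (D * Real.exp (t * |z.im|)) := by
        rw [norm_mul]; exact mul_le_mul (hC z) (hD z) (norm_nonneg _) ((norm_nonneg _).trans (hC z))
    _ = C * D * Real.exp ((s + t) * |z.im|) := by rw [add_mul, Real.exp_add]; ring

lemma comp_ofReal_mul (hg : IsOfExpType s g) {a : ℝ} (ha : 0 ≤ a) :
    IsOfExpType (s * a) (fun z => g (a * z)) := by
  obtain ⟨C, hC⟩ := hg
  refine ⟨C, fun z => ?_⟩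
  simpa [abs_mul, abs_of_nonneg ha, mul_assoc] using hC (a * z)

end IsOfExpType

namespace Complex

noncomputable def sinc : ℂ → ℂ := dslope sin 0

@[simp]
lemma sinc_zero : sinc 0 = 1 := by
  simp [sinc, dslope_same]

lemma sinc_of_ne_zero {z : ℂ} (hz : z ≠ 0) : sinc z = sin z / z := by
  rw [sinc, dslope_of_ne _ hz, slope_def_field, sin_zero, sub_zero, sub_zero]

@[fun_prop]
lemma differentiable_sinc : Differentiable ℂ sinc :=
  differentiableOn_univ.1 <|
    (differentiableOn_dslope Filter.univ_mem).2 differentiable_sin.differentiableOn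

@[simp]
lemma sinc_neg (z : ℂ) : sinc (-z) = sinc z := by
  rcases eq_or_ne z 0 with rfl | hz
  · simp
  · rw [sinc_of_ne_zero (neg_ne_zero.2 hz), sinc_of_ne_zero hz, sin_neg, neg_div_neg_eq]

lemma deriv_sinc_zero : deriv sinc 0 = 0 := by
  have h : deriv sinc 0 = -deriv sinc 0 := by
    simpa using deriv_comp_neg (f := sinc) (x := 0)
  linear_combination h / 2

@[simp, norm_cast]
lemma ofReal_sinc (x : ℝ) : ((Real.sinc x : ℝ) : ℂ) = sinc x := by
  rcases eq_or_ne x 0 with rfl | hx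
  · simp
  · rw [Real.sinc_of_ne_zero hx, sinc_of_ne_zero (ofReal_ne_zero.2 hx)]
    push_cast; rfl

lemma sinc_int_mul_pi {u : ℤ} (hu : u ≠ 0) : sinc (u * π) = 0 := by
  rw [sinc_of_ne_zero (mul_ne_zero (Int.cast_ne_zero.2 hu) (ofReal_ne_zero.2 pi_ne_zero)),
    sin_int_mul_pi, zero_div]

lemma norm_sin_le_exp_abs_im (z : ℂ) : ‖sin z‖ ≤ Real.exp |z.im| := by
  have h₁ : ‖exp (-z * I)‖ ≤ Real.exp |z.im| := by
    rw [norm_exp]; simpa using le_abs_self z.im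
  have h₂ : ‖exp (z * I)‖ ≤ Real.exp |z.im| := by
    rw [norm_exp]; simpa using neg_le_abs z.im
  calc ‖sin z‖ = ‖exp (-z * I) - exp (z * I)‖ / 2 := by simp [sin]
    _ ≤ (‖exp (-z * I)‖ + ‖exp (z * I)‖) / 2 := by gcongr; exact norm_sub_le _ _
    _ ≤ Real.exp |z.im| := by linarith

lemma isOfExpType_sin : IsOfExpType 1 sin :=
  ⟨1, fun z => by simpa using norm_sin_le_exp_abs_im z⟩

lemma isOfExpType_sinc : IsOfExpType 1 sinc := by
  obtain ⟨C, hC⟩ := (isCompact_closedBall (0 : ℂ) 1).exists_bound_of_continuousOn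
    differentiable_sinc.continuous.continuousOn
  refine ⟨max C 1, fun z => ?_⟩
  rw [one_mul]
  have hexp : 1 ≤ Real.exp |z.im| := Real.one_le_exp (abs_nonneg _)
  rcases le_or_gt ‖z‖ 1 with hz | hz
  · calc ‖sinc z‖ ≤ max C 1 := (hC z (by simpa using hz)).trans (le_max_left _ _)
      _ ≤ max C 1 * Real.exp |z.im| := le_mul_of_one_le_right (by positivity) hexp
  · rw [sinc_of_ne_zero (norm_pos_iff.1 (one_pos.trans hz)), norm_div]
    calc ‖sin z‖ / ‖z‖ ≤ ‖sin z‖ := div_le_self (norm_nonneg _) hz.le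
      _ ≤ Real.exp |z.im| := norm_sin_le_exp_abs_im z
      _ ≤ max C 1 * Real.exp |z.im| := le_mul_of_one_le_left (by positivity) (le_max_right _ _)

lemma norm_sin_ofReal_le_one (x : ℝ) : ‖sin x‖ ≤ 1 := by
  rw [← ofReal_sin, norm_real, Real.norm_eq_abs]
  exact Real.abs_sin_le_one x

lemma norm_sinc_ofReal_le_one (x : ℝ) : ‖sinc x‖ ≤ 1 := by
  rw [← ofReal_sinc, norm_real, Real.norm_eq_abs]
  exact Real.abs_sinc_le_one x

lemma norm_sinc_ofReal_sq_le (x : ℝ) : ‖sinc x‖ ^ 2 ≤ 2 * (1 + x ^ 2)⁻¹ := by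
  rw [← ofReal_sinc, norm_real, Real.norm_eq_abs, sq_abs, le_mul_inv_iff₀ (by positivity)]
  have h₁ : Real.sinc x ^ 2 ≤ 1 := by
    simpa using pow_le_one₀ (abs_nonneg _) (Real.abs_sinc_le_one x) (n := 2)
  have h₂ : Real.sinc x ^ 2 * x ^ 2 ≤ 1 := by
    rcases eq_or_ne x 0 with rfl | hx
    · simp
    · rw [Real.sinc_of_ne_zero hx, div_pow, div_mul_cancel₀ _ (pow_ne_zero 2 hx)]
      exact Real.sin_sq_le_one x
  nlinarith

lemma integrable_sinc_sq : Integrable fun x : ℝ => sinc x ^ 2 := by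
  refine (integrable_inv_one_add_sq.const_mul 2).mono' ?_ (Eventually.of_forall fun x => ?_)
  · exact ((differentiable_sinc.continuous.comp continuous_ofReal).pow 2).aestronglyMeasurable
  · simpa only [norm_pow] using norm_sinc_ofReal_sq_le x

end Complex

lemma MeasureTheory.Integrable.memLp_of_bound {α E : Type*} [MeasurableSpace α] {μ : Measure α}
    [NormedAddCommGroup E] {f : α → E} (hf : Integrable f μ) {C : ℝ} (hC : ∀ x, ‖f x‖ ≤ C)
    {q : ENNReal} (hq : 1 ≤ q) : MemLp f q μ := by
  rcases eq_or_ne q ⊤ with rfl | hq_top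
  · exact memLp_top_of_bound hf.1 C (Eventually.of_forall hC)
  have hq₀ : q ≠ 0 := (zero_lt_one.trans_le hq).ne'
  have hp : 1 ≤ q.toReal := by simpa using ENNReal.toReal_mono hq_top hq
  rw [← memLp_norm_rpow_iff hf.1 hq₀ hq_top, ENNReal.div_self hq₀ hq_top,
    memLp_one_iff_integrable]
  refine (hf.norm.const_mul (C ^ (q.toReal - 1))).mono'
    (hf.1.norm.aemeasurable.pow_const _).aestronglyMeasurable (Eventually.of_forall fun x => ?_)
  rw [Real.norm_of_nonneg (by positivity)]
  calc ‖f x‖ ^ q.toReal = ‖f x‖ ^ (q.toReal - 1) * ‖f x‖ := by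
        conv_lhs => rw [← sub_add_cancel q.toReal 1]
        rw [Real.rpow_add' (norm_nonneg _) (by linarith), Real.rpow_one]
    _ ≤ C ^ (q.toReal - 1) * ‖f x‖ := by
        gcongr
        exact hC x

lemma memLp_pi_prod_of_integrable_of_bound {ι E 𝕜 : Type*} [Fintype ι] [MeasurableSpace E]
    [NormedField 𝕜] {μ : ι → Measure E} [∀ i, SigmaFinite (μ i)] {f : ι → E → 𝕜}
    (hf : ∀ i, Integrable (f i) (μ i)) {C : ι → ℝ} (hC : ∀ i x, ‖f i x‖ ≤ C i)
    {q : ENNReal} (hq : 1 ≤ q) :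
    MemLp (fun x : ι → E => ∏ i, f i (x i)) q (Measure.pi μ) :=
  (Integrable.fintype_prod hf).memLp_of_bound (C := ∏ i, C i) (fun x => by
    rw [norm_prod]
    exact Finset.prod_le_prod (fun i _ => norm_nonneg _) (fun i _ => hC i (x i))) hq

noncomputable def coordProd {ι : Type*} [Fintype ι] (g : ι → ℂ → ℂ) : (ι → ℂ) → ℂ :=
  fun z => ∏ i, g i (z i)

section coordProd

variable {ι : Type*} [Fintype ι] {g : ι → ℂ → ℂ}

lemma coordProd_ne_zero (hg : ∀ i, ∃ z, g i z ≠ 0) : coordProd g ≠ 0 := by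
  choose z hz using hg
  exact fun h => Finset.prod_ne_zero_iff.2 (fun i _ => hz i) (congrFun h z)

lemma exists_norm_coordProd_le {σ : ι → ℝ} (hg : ∀ i, IsOfExpType (σ i) (g i)) :
    ∃ C, ∀ z : ι → ℂ, ‖coordProd g z‖ ≤ C * Real.exp (∑ i, σ i * |(z i).im|) := by
  choose C hC using hg
  refine ⟨∏ i, C i, fun z => ?_⟩
  calc ‖coordProd g z‖ = ∏ i, ‖g i (z i)‖ := norm_prod _ _
    _ ≤ ∏ i, C i * Real.exp (σ i * |(z i).im|) :=
        Finset.prod_le_prod (fun i _ => norm_nonneg _) (fun i _ => hC i (z i))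
    _ = (∏ i, C i) * Real.exp (∑ i, σ i * |(z i).im|) := by
        rw [Finset.prod_mul_distrib, Real.exp_sum]

lemma hasFDerivAt_coordProd [DecidableEq ι] (hg : ∀ i, Differentiable ℂ (g i)) (z : ι → ℂ) :
    HasFDerivAt (coordProd g)
      (∑ i, (∏ l ∈ Finset.univ.erase i, g l (z l)) •
        deriv (g i) (z i) • ContinuousLinearMap.proj (R := ℂ) (φ := fun _ : ι => ℂ) i) z :=
  HasFDerivAt.finsetProd fun i _ =>
    (hg i (z i)).hasDerivAt.comp_hasFDerivAt z (hasFDerivAt_apply i z)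

lemma differentiable_coordProd (hg : ∀ i, Differentiable ℂ (g i)) :
    Differentiable ℂ (coordProd g) := by
  classical
  exact fun z => (hasFDerivAt_coordProd hg z).differentiableAt

end coordProd

lemma differentiable_iterate_deriv {f : ℂ → ℂ} (hf : Differentiable ℂ f) (m : ℕ) :
    Differentiable ℂ (deriv^[m] f) := by
  induction m with
  | zero => exact hf
  | succ m ih => rw [Function.iterate_succ_apply']; exact ih.deriv

section pderivC_coordProd

variable {n : ℕ} {g : Fin n → ℂ → ℂ}

lemma pderivC_coordProd (hg : ∀ i, Differentiable ℂ (g i)) (j : Fin n) :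
    pderivC j (coordProd g) = coordProd (Function.update g j (deriv (g j))) := by
  funext z
  rw [pderivC, (hasFDerivAt_coordProd hg z).fderiv, coordProd,
    ← Finset.mul_prod_erase _ _ (Finset.mem_univ j)]
  simp only [sum_apply, smul_apply, ContinuousLinearMap.proj_apply, Pi.single_apply, smul_eq_mul,
    mul_ite, mul_one, mul_zero, Finset.sum_ite_eq', Finset.mem_univ, ↓reduceIte,
    Function.update_self]
  rw [mul_comm]
  exact congrArg _ <| Finset.prod_congr rfl fun l hl => by
    rw [Function.update_of_ne (Finset.ne_of_mem_erase hl)]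

lemma pderivC_iterate_coordProd (hg : ∀ i, Differentiable ℂ (g i)) (j : Fin n) (t : ℕ) :
    (pderivC j)^[t] (coordProd g) = coordProd (Function.update g j (deriv^[t] (g j))) := by
  induction t generalizing g with
  | zero => simp
  | succ t ih =>
    have hg' : ∀ i, Differentiable ℂ (Function.update g j (deriv (g j)) i) := by
      intro i
      rcases eq_or_ne i j with rfl | hij
      · simpa using (hg i).deriv
      · simpa [hij] using hg i
    rw [Function.iterate_succ_apply, pderivC_coordProd hg, ih hg', Function.update_idem,
      Function.update_self, ← Function.iterate_succ_apply]

lemma foldr_pderivC_coordProd (hg : ∀ i, Differentiable ℂ (g i)) (k : Fin n → ℕ)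
    (L : List (Fin n)) :
    L.foldr (fun j f => (pderivC j)^[k j] f) (coordProd g) =
      coordProd (fun i => deriv^[L.count i * k i] (g i)) := by
  induction L with
  | nil => simp
  | cons j L ih =>
    rw [List.foldr_cons, ih,
      pderivC_iterate_coordProd (fun i => differentiable_iterate_deriv (hg i) _) j (k j)]
    congr 1
    funext i
    rcases eq_or_ne i j with rfl | hij
    · rw [Function.update_self, List.count_cons_self, ← Function.iterate_add_apply, add_mul,
        one_mul, add_comm]
    · simp [hij, List.count_cons_of_ne hij.symm]

lemma mixedPartial_coordProd (hg : ∀ i, Differentiable ℂ (g i)) (k : Fin n → ℕ) :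
    mixedPartial k (coordProd g) = coordProd (fun i => deriv^[k i] (g i)) := by
  simp [mixedPartial, foldr_pderivC_coordProd hg, List.count_finRange]

end pderivC_coordProd

noncomputable def samplingFactor (s : ℝ) : Fin 2 → ℂ → ℂ :=
  ![fun z : ℂ => sinc ((s / 2 : ℝ) * z) ^ 2,
    fun z : ℂ => sin ((s / 2 : ℝ) * z) * sinc ((s / 4 : ℝ) * z) ^ 2]

section samplingFactor

variable {s : ℝ}

lemma samplingFactor_zero (s : ℝ) :
    samplingFactor s 0 = fun z : ℂ => sinc ((s / 2 : ℝ) * z) ^ 2 := rfl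

lemma samplingFactor_one (s : ℝ) :
    samplingFactor s 1 = fun z : ℂ => sin ((s / 2 : ℝ) * z) * sinc ((s / 4 : ℝ) * z) ^ 2 := rfl

lemma differentiable_samplingFactor (s : ℝ) (a : Fin 2) :
    Differentiable ℂ (samplingFactor s a) := by
  match a with
  | 0 => rw [samplingFactor_zero]; fun_prop
  | 1 => rw [samplingFactor_one]; fun_prop

lemma isOfExpType_samplingFactor (hs : 0 ≤ s) (a : Fin 2) :
    IsOfExpType s (samplingFactor s a) := by
  have h₂ := isOfExpType_sinc.comp_ofReal_mul (a := s / 2) (by positivity)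
  have h₄ := isOfExpType_sinc.comp_ofReal_mul (a := s / 4) (by positivity)
  match a with
  | 0 =>
    convert h₂.mul h₂ using 1
    · ring
    · simp [samplingFactor_zero, sq]
  | 1 =>
    convert (isOfExpType_sin.comp_ofReal_mul (a := s / 2) (by positivity)).mul (h₄.mul h₄) using 1
    · ring
    · simp [samplingFactor_one, sq]

lemma integrable_samplingFactor (hs : s ≠ 0) (a : Fin 2) :
    Integrable fun x : ℝ => samplingFactor s a x := by
  have h₂ := integrable_sinc_sq.comp_mul_left' (R := s / 2) (by positivity)
  have h₄ := integrable_sinc_sq.comp_mul_left' (R := s / 4) (by positivity)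
  match a with
  | 0 => simpa [samplingFactor_zero] using h₂
  | 1 =>
    have hsin : Continuous fun x : ℝ => sin ((s / 2 : ℝ) * (x : ℂ)) := by fun_prop
    refine (h₄.bdd_mul (c := 1) hsin.aestronglyMeasurable (Eventually.of_forall fun x => ?_)).congr
      (Eventually.of_forall fun x => by simp [samplingFactor_one])
    rw [← ofReal_mul]
    exact norm_sin_ofReal_le_one _

lemma norm_samplingFactor_ofReal_le_one (s : ℝ) (a : Fin 2) (x : ℝ) :
    ‖samplingFactor s a x‖ ≤ 1 := by
  match a with
  | 0 =>
    have h := norm_sinc_ofReal_le_one (s / 2 * x)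
    push_cast at h
    simpa [samplingFactor_zero] using pow_le_one₀ (norm_nonneg _) h (n := 2)
  | 1 =>
    simp only [samplingFactor_one, ← ofReal_mul, norm_mul, norm_pow]
    exact mul_le_one₀ (norm_sin_ofReal_le_one _) (by positivity)
      (pow_le_one₀ (norm_nonneg _) (norm_sinc_ofReal_le_one _))

lemma exists_samplingFactor_ne_zero (hs : 0 < s) (a : Fin 2) :
    ∃ z, samplingFactor s a z ≠ 0 := by
  match a with
  | 0 => exact ⟨0, by simp [samplingFactor_zero]⟩
  | 1 =>
    refine ⟨(π / s : ℝ), ?_⟩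
    have h₂ : s / 2 * (π / s) = π / 2 := by field_simp
    have h₄ : s / 4 * (π / s) = π / 4 := by field_simp
    have hsinc : Real.sinc (π / 4) ≠ 0 := by
      rw [Real.sinc_of_ne_zero (by positivity)]
      exact div_ne_zero (Real.sin_pos_of_pos_of_lt_pi (by positivity) (by linarith [pi_pos])).ne'
        (by positivity)
    simp only [samplingFactor_one, ← ofReal_mul, h₂, h₄, ← ofReal_sin, Real.sin_pi_div_two,
      ← ofReal_sinc]
    exact_mod_cast mul_ne_zero one_ne_zero (pow_ne_zero 2 hsinc)

lemma ofReal_half_mul_node (hs : s ≠ 0) (u : ℤ) :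
    ((s / 2 : ℝ) : ℂ) * ((2 * π * u / s : ℝ) : ℂ) = u * π := by
  push_cast
  field_simp [ofReal_ne_zero.2 hs]

lemma samplingFactor_one_node (hs : s ≠ 0) (u : ℤ) :
    samplingFactor s 1 (2 * π * u / s : ℝ) = 0 := by
  simp only [samplingFactor_one, ofReal_half_mul_node hs, Complex.sin_int_mul_pi, zero_mul]

lemma deriv_samplingFactor_zero_node (hs : s ≠ 0) (u : ℤ) :
    deriv (samplingFactor s 0) (2 * π * u / s : ℝ) = 0 := by
  set c : ℂ := ((s / 2 : ℝ) : ℂ)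
  have hderiv : ∀ z,
      deriv (samplingFactor s 0) z = 2 * sinc (c * z) * (deriv Complex.sinc (c * z) * c) :=
    fun z => (((differentiable_sinc _).hasDerivAt.comp z
      ((hasDerivAt_id z).const_mul c)).pow 2).deriv.trans (by simp)
  rw [hderiv, ofReal_half_mul_node hs]
  rcases eq_or_ne u 0 with rfl | hu
  · simp [deriv_sinc_zero]
  · simp [sinc_int_mul_pi hu]

lemma iterate_deriv_samplingFactor_node (hs : s ≠ 0) {a b : Fin 2} (hab : b ≠ a) (u : ℤ) :
    deriv^[b] (samplingFactor s a) (2 * π * u / s : ℝ) = 0 := by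
  match a, b with
  | 0, 0 | 1, 1 => exact absurd rfl hab
  | 0, 1 => exact deriv_samplingFactor_zero_node hs u
  | 1, 0 => exact samplingFactor_one_node hs u

end samplingFactor

/-- Exactness of the sampling theorem with derivatives: for every `k̃ ∈ Eⁿ` there is a
nonzero entire function `f̃` of exponential type `σ`, lying in `L^p(ℝⁿ)` for every
`1 ≤ p ≤ ∞`, all of whose sample data `∂^k f̃ (2πu/σ)` with `k ∈ Eⁿ`, `k ≠ k̃`, vanish. -/
theorem sampling_with_derivatives_exact {n : ℕ}
    (σ : Fin n → ℝ) (hσ : ∀ j, 0 < σ j) (ktil : Fin n → Fin 2) :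
    ∃ f : (Fin n → ℂ) → ℂ,
      Differentiable ℂ f ∧
      (∃ C, ∀ z, ‖f z‖ ≤ C * Real.exp (∑ j, σ j * |(z j).im|)) ∧
      f ≠ 0 ∧
      (∀ q : ENNReal, 1 ≤ q →
        MemLp (fun x : Fin n → ℝ => f (fun j => (x j : ℂ))) q volume) ∧
      (∀ u : Fin n → ℤ, ∀ k : Fin n → Fin 2, k ≠ ktil →
        mixedPartial (fun j => (k j : ℕ)) f (samplePt σ u) = 0) := by
  have hdiff j := differentiable_samplingFactor (σ j) (ktil j)
  refine ⟨coordProd fun j => samplingFactor (σ j) (ktil j), differentiable_coordProd hdiff,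
    exists_norm_coordProd_le fun j => isOfExpType_samplingFactor (hσ j).le _,
    coordProd_ne_zero fun j => exists_samplingFactor_ne_zero (hσ j) _,
    fun q hq => memLp_pi_prod_of_integrable_of_bound
      (fun j => integrable_samplingFactor (hσ j).ne' _)
      (fun j => norm_samplingFactor_ofReal_le_one _ _) hq,
    fun u k hk => ?_⟩
  obtain ⟨j, hj⟩ := Function.ne_iff.mp hk
  rw [mixedPartial_coordProd hdiff]
  exact Finset.prod_eq_zero (Finset.mem_univ j) (iterate_deriv_samplingFactor_node (hσ j).ne' hj _)
end

section
/- Let f : ℂ → ℂ be an entire function of exponential type π (i.e. |f(z)| ≤ C·e^{π|Im z|} for some constant C) such that f(x) → 0 as x → ±∞ along ℝ. If f(2k) = 0 and f′(2k) = 0 for every k ∈ ℤ, then f is identically zero. -/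
/-!
The function `s z = sin (π z / 2)` has simple zeros exactly at the even integers, where `f` vanishes
to second order, so `f / s ^ 2` extends to an entire function `G`. On the lines `|Im z| = 1` and
`Re z ∈ 2ℤ + 1` one has `‖s z‖ ≥ exp (π |Im z| / 2) / 4`, so the type bound on `f` bounds `G` there,
and the maximum modulus principle on the squares cut out by these lines bounds `G` everywhere.
By Liouville `G` is a constant `c`, so `f = c s ^ 2`; then `f (2n + 1) = c` for all `n`, and
`f → 0` at `+∞` forces `c = 0`.
-/

open Complex Real Filter Set Metric Topology

lemma Real.exp_div_four_le_sinh {t : ℝ} (ht : 1 / 2 ≤ t) : Real.exp t / 4 ≤ sinh t := by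
  have h : Real.exp (-t) * 2 ≤ Real.exp t := by
    calc Real.exp (-t) * 2 ≤ Real.exp (-t) * Real.exp (2 * t) := by
          gcongr; linarith [Real.add_one_le_exp (2 * t)]
      _ = Real.exp t := by rw [← Real.exp_add]; ring_nf
  rw [Real.sinh_eq]
  linarith

namespace Complex

lemma norm_sin_sq (w : ℂ) : ‖sin w‖ ^ 2 = Real.sin w.re ^ 2 + Real.sinh w.im ^ 2 := by
  rw [sin_eq, ← ofReal_sin, ← ofReal_cosh, ← ofReal_cos, ← ofReal_sinh, ← ofReal_mul,
    ← ofReal_mul, ← normSq_eq_norm_sq, normSq_add_mul_I]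
  nlinarith [Real.sin_sq_add_cos_sq w.re, Real.cosh_sq w.im]

lemma exp_abs_im_div_four_le_norm_sin (w : ℂ) (h : 1 / 2 ≤ |w.im| ∨ Real.cos w.re = 0) :
    Real.exp |w.im| / 4 ≤ ‖sin w‖ := by
  rw [← sq_le_sq₀ (by positivity) (norm_nonneg _), norm_sin_sq]
  rcases h with h | h
  · have h' := pow_le_pow_left₀ (by positivity) (Real.exp_div_four_le_sinh h) 2
    rw [← Real.abs_sinh, sq_abs] at h'
    linarith [sq_nonneg (Real.sin w.re)]
  · have hcosh : Real.exp |w.im| / 4 ≤ Real.cosh w.im := by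
      rw [← Real.cosh_abs, Real.cosh_eq]
      linarith [Real.exp_pos |w.im|, Real.exp_pos (-|w.im|)]
    have hsq : Real.sin w.re ^ 2 + Real.sinh w.im ^ 2 = Real.cosh w.im ^ 2 := by
      rw [Real.sin_sq, h, Real.cosh_sq']; ring
    rw [hsq]
    exact pow_le_pow_left₀ (by positivity) hcosh 2

lemma exp_div_four_le_norm_sin_pi_div_two_mul {z : ℂ}
    (hz : 1 ≤ |z.im| ∨ ∃ m : ℤ, z.re = 2 * m + 1) :
    Real.exp (π / 2 * |z.im|) / 4 ≤ ‖sin (π / 2 * z)‖ := by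
  have hre : (π / 2 * z).re = π / 2 * z.re := by simp
  have him : |(π / 2 * z).im| = π / 2 * |z.im| := by
    rw [show (π / 2 * z).im = π / 2 * z.im by simp, abs_mul, abs_of_pos (by positivity)]
  rw [← him]
  refine exp_abs_im_div_four_le_norm_sin _ ?_
  rcases hz with hz | ⟨m, hm⟩
  · left; rw [him]; nlinarith [pi_gt_three]
  · right; exact Real.cos_eq_zero_iff.2 ⟨m, by rw [hre, hm]; ring⟩

lemma sin_pi_div_two_mul_eq_zero_iff {z : ℂ} :
    sin (π / 2 * z) = 0 ↔ ∃ k : ℤ, z = ((2 * k : ℤ) : ℂ) := by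
  have hπ : (π : ℂ) ≠ 0 := ofReal_ne_zero.2 pi_ne_zero
  rw [sin_eq_zero_iff]
  refine exists_congr fun k => ⟨fun h => ?_, fun h => ?_⟩
  · push_cast; apply mul_left_cancel₀ hπ; linear_combination 2 * h
  · subst h; push_cast; ring

lemma sin_pi_div_two_mul_odd_sq (m : ℤ) : sin (π / 2 * (2 * m + 1)) ^ 2 = 1 := by
  rw [sin_sq, cos_eq_zero_iff.2 ⟨m, by ring⟩]
  ring

lemma deriv_sin_const_mul_ne_zero {c a : ℂ} (hc : c ≠ 0) (ha : sin (c * a) = 0) :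
    deriv (fun z => sin (c * z)) a ≠ 0 := by
  have hcos : cos (c * a) ≠ 0 := by
    intro h; simpa [ha, h] using sin_sq_add_cos_sq (c * a)
  rw [((hasDerivAt_id' a).const_mul c).csin.deriv]
  simpa using ⟨hcos, hc⟩

end Complex

lemma norm_le_of_norm_le_on_grid {G : ℂ → ℂ} (hG : Differentiable ℂ G) {M : ℝ}
    (hM : ∀ z : ℂ, (1 ≤ |z.im| ∨ ∃ m : ℤ, z.re = 2 * m + 1) → ‖G z‖ ≤ M) (z : ℂ) :
    ‖G z‖ ≤ M := by
  by_cases him : 1 ≤ |z.im|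
  · exact hM z (Or.inl him)
  set k := round (z.re / 2)
  have hk := abs_le.1 (abs_sub_round (z.re / 2))
  have hy := abs_le.1 (not_le.1 him).le
  have hre : 2 * (k : ℝ) - 1 < 2 * k + 1 := by linarith
  have him' : (-1 : ℝ) < 1 := by norm_num
  set U := Ioo (2 * (k : ℝ) - 1) (2 * k + 1) ×ℂ Ioo (-1 : ℝ) 1
  have hzU : z ∈ closure U := by
    rw [closure_reProdIm, closure_Ioo hre.ne, closure_Ioo him'.ne, mem_reProdIm]
    exact ⟨⟨by linarith, by linarith⟩, hy⟩
  refine norm_le_of_forall_mem_frontier_norm_le (isBounded_Ioo _ _ |>.reProdIm (isBounded_Ioo _ _))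
    hG.diffContOnCl (fun w hw => hM w ?_) hzU
  rw [frontier_reProdIm, closure_Ioo hre.ne, closure_Ioo him'.ne, frontier_Ioo hre,
    frontier_Ioo him'] at hw
  rcases hw with ⟨-, hw⟩ | ⟨hw, -⟩
  · left
    rcases hw with h | h <;> simp [show w.im = _ from h]
  · right
    rcases hw with h | h
    · exact ⟨k - 1, by push_cast; linarith [show w.re = _ from h]⟩
    · exact ⟨k, by rw [show w.re = _ from h]⟩

lemma Differentiable.dslope {E : Type*} [NormedAddCommGroup E] [NormedSpace ℂ E] [CompleteSpace E]
    {f : ℂ → E}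
    (hf : Differentiable ℂ f) (a : ℂ) : Differentiable ℂ (dslope f a) :=
  differentiableOn_univ.1 ((differentiableOn_dslope univ_mem).2 hf.differentiableOn)

lemma div_sq_eq_dslope_dslope_div_dslope_sq {𝕜 : Type*} [NontriviallyNormedField 𝕜]
    {f s : 𝕜 → 𝕜} {a z : 𝕜} (hfa : f a = 0) (hf'a : deriv f a = 0) (hsa : s a = 0)
    (hz : z ≠ a) : f z / s z ^ 2 = dslope (dslope f a) a z / dslope s a z ^ 2 := by
  have hza : z - a ≠ 0 := sub_ne_zero.2 hz
  simp only [dslope_of_ne _ hz, slope_def_field, dslope_same, hfa, hf'a, hsa, sub_zero]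
  field_simp

/-- `f / s ^ 2`, with the value `f'' / (2 s' ^ 2)` at the zeros of `s`: this removes the
singularity at a simple zero of `s` where `f` vanishes to second order. -/
noncomputable def divSq (f s : ℂ → ℂ) (z : ℂ) : ℂ :=
  if s z = 0 then dslope (dslope f z) z z / deriv s z ^ 2 else f z / s z ^ 2

lemma divSq_of_ne_zero {f s : ℂ → ℂ} {z : ℂ} (hz : s z ≠ 0) : divSq f s z = f z / s z ^ 2 :=
  if_neg hz

lemma divSq_eventuallyEq {f s : ℂ → ℂ} {a : ℂ} (hs : DifferentiableAt ℂ s a) (hfa : f a = 0)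
    (hf'a : deriv f a = 0) (hsa : s a = 0) (hs'a : deriv s a ≠ 0) :
    divSq f s =ᶠ[𝓝 a] fun z => dslope (dslope f a) a z / dslope s a z ^ 2 := by
  have hne : ∀ᶠ z in 𝓝 a, z ≠ a → s z ≠ 0 :=
    eventually_nhdsWithin_iff.1 (hs.hasDerivAt.eventually_ne hs'a)
  filter_upwards [hne] with z hz
  by_cases hza : z = a
  · subst hza
    simp [divSq, hsa, dslope_same]
  · rw [divSq_of_ne_zero (hz hza), div_sq_eq_dslope_dslope_div_dslope_sq hfa hf'a hsa hza]

lemma differentiable_divSq {f s : ℂ → ℂ} (hf : Differentiable ℂ f) (hs : Differentiable ℂ s)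
    (hzeros : ∀ a, s a = 0 → f a = 0 ∧ deriv f a = 0 ∧ deriv s a ≠ 0) :
    Differentiable ℂ (divSq f s) := by
  intro a
  by_cases hsa : s a = 0
  · obtain ⟨hfa, hf'a, hs'a⟩ := hzeros a hsa
    refine DifferentiableAt.congr_of_eventuallyEq ?_ (divSq_eventuallyEq (hs a) hfa hf'a hsa hs'a)
    refine ((hf.dslope a).dslope a a).div ((hs.dslope a a).pow 2) ?_
    simpa [dslope_same] using hs'a
  · refine ((hf a).div ((hs a).pow 2) (pow_ne_zero 2 hsa)).congr_of_eventuallyEq ?_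
    filter_upwards [(hs a).continuousAt.eventually_ne hsa] with z hz
    exact divSq_of_ne_zero hz

lemma norm_divSq_sin_le {f : ℂ → ℂ} {C : ℝ} (hC : ∀ z, ‖f z‖ ≤ C * Real.exp (π * |z.im|))
    {z : ℂ} (hz : 1 ≤ |z.im| ∨ ∃ m : ℤ, z.re = 2 * m + 1) :
    ‖divSq f (fun z => sin (π / 2 * z)) z‖ ≤ 16 * C := by
  have hs := exp_div_four_le_norm_sin_pi_div_two_mul hz
  have hpos : 0 < Real.exp (π / 2 * |z.im|) / 4 := by positivity
  have hC0 : 0 ≤ C := nonneg_of_mul_nonneg_left ((norm_nonneg _).trans (hC z)) (Real.exp_pos _)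
  have hs0 : 0 < ‖sin (π / 2 * z)‖ := hpos.trans_le hs
  rw [divSq_of_ne_zero (s := fun z => sin (π / 2 * z)) (norm_pos_iff.1 hs0), norm_div, norm_pow,
    div_le_iff₀ (pow_pos hs0 2)]
  calc ‖f z‖ ≤ C * Real.exp (π * |z.im|) := hC z
    _ = 16 * C * (Real.exp (π / 2 * |z.im|) / 4) ^ 2 := by
      rw [div_pow, ← Real.exp_nat_mul]; ring_nf
    _ ≤ 16 * C * ‖sin (π / 2 * z)‖ ^ 2 := by gcongr

theorem eq_zero_of_double_samples_vanish_dim_one_general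
    (f : ℂ → ℂ) (hf : Differentiable ℂ f)
    (C : ℝ) (hC : ∀ z : ℂ, ‖f z‖ ≤ C * Real.exp (Real.pi * |z.im|))
    (htop : Tendsto (fun x : ℝ => f (x : ℂ)) atTop (nhds 0))
    (hsamples : ∀ k : ℤ, f ((2 * k : ℤ) : ℂ) = 0 ∧ deriv f ((2 * k : ℤ) : ℂ) = 0) :
    f = 0 := by
  set s : ℂ → ℂ := fun z => sin (π / 2 * z) with hs
  have hzeros : ∀ a, s a = 0 → f a = 0 ∧ deriv f a = 0 ∧ deriv s a ≠ 0 := by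
    intro a ha
    obtain ⟨k, rfl⟩ := sin_pi_div_two_mul_eq_zero_iff.1 ha
    exact ⟨(hsamples k).1, (hsamples k).2, deriv_sin_const_mul_ne_zero (by simp [pi_ne_zero]) ha⟩
  have hG := differentiable_divSq hf (by fun_prop) hzeros
  obtain ⟨c, hc⟩ := hG.exists_const_forall_eq_of_bounded <| isBounded_iff_forall_norm_le.2
    ⟨16 * C, forall_mem_range.2 <| norm_le_of_norm_le_on_grid hG fun _ hz =>
      norm_divSq_sin_le hC hz⟩
  have hfac : ∀ z, f z = c * s z ^ 2 := by
    intro z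
    by_cases hz : s z = 0
    · rw [(hzeros z hz).1, hz]; ring
    · rw [← hc z, divSq_of_ne_zero hz]; field_simp
  have hodd (n : ℕ) : f ((2 * n + 1 : ℝ) : ℂ) = c := by
    have h := sin_pi_div_two_mul_odd_sq n
    push_cast at h ⊢
    simp only [hfac, hs, h, mul_one]
  have hc0 : c = 0 := tendsto_nhds_unique (tendsto_const_nhds.congr fun n => (hodd n).symm)
    (htop.comp (tendsto_atTop_add_const_right _ 1
      (tendsto_natCast_atTop_atTop.const_mul_atTop two_pos)))
  funext z
  simp [hfac z, hc0]

/-- One-dimensional case of Proposition 2.3: an entire function of exponential type `π`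
that tends to `0` along the real axis at `±∞` and vanishes to second order at every even
integer is identically zero. -/
theorem eq_zero_of_double_samples_vanish_dim_one
    (f : ℂ → ℂ) (hf : Differentiable ℂ f)
    (C : ℝ) (hC : ∀ z : ℂ, ‖f z‖ ≤ C * Real.exp (Real.pi * |z.im|))
    (htop : Tendsto (fun x : ℝ => f (x : ℂ)) atTop (nhds 0))
    (hbot : Tendsto (fun x : ℝ => f (x : ℂ)) atBot (nhds 0))
    (hsamples : ∀ k : ℤ, f ((2 * k : ℤ) : ℂ) = 0 ∧ deriv f ((2 * k : ℤ) : ℂ) = 0) :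
    f = 0 :=
  eq_zero_of_double_samples_vanish_dim_one_general f hf C hC htop hsamples
end

section
/- For every positive integer τ, every point z on the topological boundary of the rectangle D_τ = {z ∈ ℂ : |Re z| ≤ 1 + 2τ, |Im z| ≤ 2} satisfies |sin(πz/2)| ≥ 1. -/
open Complex Real

/-! Since `‖sin (x + y i)‖² = sin² x + sinh² y`, it suffices that on the vertical sides `π x / 2` is
an odd multiple of `π / 2`, so `sin² (π x / 2) = 1`, while on the horizontal sides
`sinh² (π y / 2) = sinh² π > 1`. -/

theorem Complex.sq_norm_sin (z : ℂ) :
    ‖Complex.sin z‖ ^ 2 = Real.sin z.re ^ 2 + Real.sinh z.im ^ 2 := by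
  rw [Complex.sq_norm, Complex.sin_eq, ← ofReal_sin, ← ofReal_cosh, ← ofReal_cos, ← ofReal_sinh,
    ← ofReal_mul, ← ofReal_mul, normSq_add_mul_I]
  linear_combination Real.sin z.re ^ 2 * Real.cosh_sq z.im +
    Real.sinh z.im ^ 2 * Real.sin_sq_add_cos_sq z.re

theorem frontier_abs_re_le_and_abs_im_le_subset (a b : ℝ) :
    frontier {w : ℂ | |w.re| ≤ a ∧ |w.im| ≤ b} ⊆ {w | |w.re| = a} ∪ {w | |w.im| = b} := by
  rw [Set.ofPred_and]
  exact (frontier_inter_subset _ _).trans <| Set.union_subset_union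
    (Set.inter_subset_left.trans <| frontier_le_subset_eq (by fun_prop) continuous_const)
    (Set.inter_subset_right.trans <| frontier_le_subset_eq (by fun_prop) continuous_const)

theorem Real.sin_sq_pi_mul_div_two_of_abs_eq_odd {x : ℝ} {m : ℤ} (hm : Odd m) (hx : |x| = m) :
    Real.sin (π * x / 2) ^ 2 = 1 := by
  obtain ⟨k, rfl⟩ := hm
  have hcos : Real.cos (π * x / 2) = 0 := by
    rw [← Real.cos_abs, abs_div, abs_mul, abs_of_pos Real.pi_pos, abs_two, hx]
    exact Real.cos_eq_zero_iff.2 ⟨k, by push_cast; ring⟩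
  rw [Real.sin_sq, hcos, sq, zero_mul, sub_zero]

theorem Real.one_lt_sinh_pi : 1 < Real.sinh π :=
  (Real.pi_gt_three.trans (Real.self_lt_sinh_iff.2 Real.pi_pos)).trans' (by norm_num)

theorem Real.one_lt_sinh_sq_pi_mul_div_two_of_abs_eq_two {y : ℝ} (hy : |y| = 2) :
    1 < Real.sinh (π * y / 2) ^ 2 := by
  have hπ : 1 < Real.sinh π ^ 2 := one_lt_pow₀ Real.one_lt_sinh_pi two_ne_zero
  rcases (abs_eq zero_le_two).1 hy with rfl | rfl
  · rwa [mul_div_cancel_right₀ _ two_ne_zero]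
  · rwa [show π * -2 / 2 = -π by ring, Real.sinh_neg, neg_sq]

theorem one_le_abs_sin_on_boundary_general (τ : ℕ) (z : ℂ)
    (hz : z ∈ frontier {w : ℂ | |w.re| ≤ 1 + 2 * (τ : ℝ) ∧ |w.im| ≤ 2}) :
    1 ≤ ‖Complex.sin (Real.pi * z / 2)‖ := by
  have hre : (π * z / 2 : ℂ).re = π * z.re / 2 := by simp
  have him : (π * z / 2 : ℂ).im = π * z.im / 2 := by simp
  suffices 1 ≤ ‖Complex.sin (π * z / 2)‖ ^ 2 by
    simpa using (one_le_sq_iff_one_le_abs _).1 this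
  rw [Complex.sq_norm_sin, hre, him]
  rcases frontier_abs_re_le_and_abs_im_le_subset _ _ hz with hx | hy
  · rw [Real.sin_sq_pi_mul_div_two_of_abs_eq_odd (odd_two_mul_add_one (τ : ℤ))
      (by rw [hx]; push_cast; ring)]
    exact le_add_of_nonneg_right (sq_nonneg _)
  · exact (Real.one_lt_sinh_sq_pi_mul_div_two_of_abs_eq_two hy).le.trans
      (le_add_of_nonneg_left (sq_nonneg _))

/-- On the boundary of the rectangle `D_τ = {|Re z| ≤ 1 + 2τ, |Im z| ≤ 2}` (τ a positive
integer) one has `|sin (π z / 2)| ≥ 1`. -/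
theorem one_le_abs_sin_on_boundary (τ : ℕ) (hτ : 0 < τ) (z : ℂ)
    (hz : z ∈ frontier {w : ℂ | |w.re| ≤ 1 + 2 * (τ : ℝ) ∧ |w.im| ≤ 2}) :
    1 ≤ ‖Complex.sin (Real.pi * z / 2)‖ :=
  one_le_abs_sin_on_boundary_general τ z hz
end
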